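/- arXiv:2605.05086 — 2 statements merged into one kernel-verified Lean document; each statement's English description precedes it below -/
import Mathlib

section
/- Piecewise form of the penalty for a positive coefficient and a violated constraint: if a_{ij} > 0 and ȳ_i > b_i (equivalently x̄_j > t_{ij}), then for every candidate value x̂_j ∈ ℝ, p_{ij}(x̂_j, x̄) = w_i if x̂_j ≤ t_{ij}; p_{ij}(x̂_j, x̄) = w_i/2 if t_{ij} < x̂_j < x̄_j; p_{ij}(x̂_j, x̄) = 0 if x̂_j = x̄_j; and p_{ij}(x̂_j, x̄) = −w_i/2 if x̂_j > x̄_j. -/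
/-!
For `a i j > 0` the moved activity `x̂ ↦ Σ_{k≠j} a i k * x̄ k + a i j * x̂` is strictly increasing,
equals the activity `ȳ_i` at `x̂ = x̄ j`, and is `≤ b i` exactly when `x̂ ≤ t_ij`. Since `ȳ_i > b i`,
the four branches of the penalty correspond to the intervals `(-∞, t_ij]`, `(t_ij, x̄ j)`,
`{x̄ j}` and `(x̄ j, ∞)`.
-/

open Finset

/-- Activity of constraint `i` at the incumbent point `xbar`. -/
noncomputable def activity {m n : ℕ} (a : Fin m → Fin n → ℝ) (xbar : Fin n → ℝ)
    (i : Fin m) : ℝ :=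
  ∑ k, a i k * xbar k

/-- Moved activity of constraint `i` when variable `j` takes candidate value `xhat`. -/
noncomputable def movedActivity {m n : ℕ} (a : Fin m → Fin n → ℝ) (xbar : Fin n → ℝ)
    (j : Fin n) (i : Fin m) (xhat : ℝ) : ℝ :=
  (∑ k ∈ Finset.univ.erase j, a i k * xbar k) + a i j * xhat

/-- Penalty of moving variable `j` from `xbar j` to `xhat` w.r.t. constraint `i`. -/
noncomputable def penalty {m n : ℕ} (a : Fin m → Fin n → ℝ) (b w : Fin m → ℝ)
    (xbar : Fin n → ℝ) (j : Fin n) (i : Fin m) (xhat : ℝ) : ℝ :=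
  if activity a xbar i ≤ b i ∧ movedActivity a xbar j i xhat > b i then -w i
  else if activity a xbar i > b i ∧ movedActivity a xbar j i xhat ≤ b i then w i
  else if activity a xbar i > b i ∧ movedActivity a xbar j i xhat > b i ∧
      movedActivity a xbar j i xhat < activity a xbar i then w i / 2
  else if activity a xbar i > b i ∧ movedActivity a xbar j i xhat > b i ∧
      movedActivity a xbar j i xhat > activity a xbar i then -w i / 2
  else 0

/-- Score of moving variable `j` to candidate value `xhat`. -/
noncomputable def score {m n : ℕ} (a : Fin m → Fin n → ℝ) (b w : Fin m → ℝ)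
    (xbar : Fin n → ℝ) (j : Fin n) (xhat : ℝ) : ℝ :=
  ∑ i, penalty a b w xbar j i xhat

/-- Breakpoint of constraint `i` for variable `j` (meaningful when `a i j ≠ 0`). -/
noncomputable def breakpoint {m n : ℕ} (a : Fin m → Fin n → ℝ) (b : Fin m → ℝ)
    (xbar : Fin n → ℝ) (j : Fin n) (i : Fin m) : ℝ :=
  (b i - ∑ k ∈ Finset.univ.erase j, a i k * xbar k) / a i j

section MovedActivity

variable {m n : ℕ} (a : Fin m → Fin n → ℝ) (b : Fin m → ℝ) (xbar : Fin n → ℝ)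
  (j : Fin n) (i : Fin m)

theorem movedActivity_self : movedActivity a xbar j i (xbar j) = activity a xbar i :=
  Finset.sum_erase_add _ _ (Finset.mem_univ j)

variable {a j i}

theorem movedActivity_strictMono (ha : 0 < a i j) : StrictMono (movedActivity a xbar j i) :=
  fun _ _ h => add_lt_add_right (mul_lt_mul_of_pos_left h ha) _

theorem movedActivity_le_iff_le_breakpoint (ha : 0 < a i j) {x : ℝ} :
    movedActivity a xbar j i x ≤ b i ↔ x ≤ breakpoint a b xbar j i := by
  rw [breakpoint, le_div_iff₀ ha, movedActivity]
  constructor <;> intro h <;> linarith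

theorem lt_movedActivity_iff_breakpoint_lt (ha : 0 < a i j) {x : ℝ} :
    b i < movedActivity a xbar j i x ↔ breakpoint a b xbar j i < x :=
  lt_iff_lt_of_le_iff_le (movedActivity_le_iff_le_breakpoint b xbar ha)

end MovedActivity

section Violated

variable {m n : ℕ} {a : Fin m → Fin n → ℝ} {b : Fin m → ℝ} (w : Fin m → ℝ)
  {xbar : Fin n → ℝ} {j : Fin n} {i : Fin m} {x : ℝ}

theorem penalty_of_violated_of_le (hviol : b i < activity a xbar i)
    (h : movedActivity a xbar j i x ≤ b i) : penalty a b w xbar j i x = w i := by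
  rw [penalty, if_neg fun h' => hviol.not_ge h'.1, if_pos ⟨hviol, h⟩]

theorem penalty_of_violated_of_lt_activity (hviol : b i < activity a xbar i)
    (hb : b i < movedActivity a xbar j i x) (h : movedActivity a xbar j i x < activity a xbar i) :
    penalty a b w xbar j i x = w i / 2 := by
  rw [penalty, if_neg fun h' => hviol.not_ge h'.1, if_neg fun h' => hb.not_ge h'.2,
    if_pos ⟨hviol, hb, h⟩]

theorem penalty_of_violated_of_eq_activity (hviol : b i < activity a xbar i)
    (h : movedActivity a xbar j i x = activity a xbar i) : penalty a b w xbar j i x = 0 := by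
  rw [penalty, h, if_neg fun h' => hviol.not_ge h'.1, if_neg fun h' => hviol.not_ge h'.2,
    if_neg fun h' => lt_irrefl _ h'.2.2, if_neg fun h' => lt_irrefl _ h'.2.2]

theorem penalty_of_violated_of_activity_lt (hviol : b i < activity a xbar i)
    (h : activity a xbar i < movedActivity a xbar j i x) :
    penalty a b w xbar j i x = -w i / 2 := by
  have hb := hviol.trans h
  rw [penalty, if_neg fun h' => hviol.not_ge h'.1, if_neg fun h' => hb.not_ge h'.2,
    if_neg fun h' => h.not_gt h'.2.2, if_pos ⟨hviol, hb, h⟩]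

end Violated

theorem penalty_piecewise_pos_violated_general
    {m n : ℕ} (a : Fin m → Fin n → ℝ) (b w : Fin m → ℝ)
    (xbar : Fin n → ℝ) (j : Fin n) (i : Fin m)
    (ha : a i j > 0) (hviol : activity a xbar i > b i) :
    xbar j > breakpoint a b xbar j i ∧
    ∀ xhat : ℝ,
      (xhat ≤ breakpoint a b xbar j i → penalty a b w xbar j i xhat = w i) ∧
      (breakpoint a b xbar j i < xhat → xhat < xbar j →
        penalty a b w xbar j i xhat = w i / 2) ∧
      (xhat = xbar j → penalty a b w xbar j i xhat = 0) ∧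
      (xhat > xbar j → penalty a b w xbar j i xhat = -w i / 2) := by
  have hself := movedActivity_self a xbar j i
  have hmono := movedActivity_strictMono xbar ha
  refine ⟨(lt_movedActivity_iff_breakpoint_lt b xbar ha).1 (hself ▸ hviol),
    fun xhat => ⟨fun h => ?_, fun h₁ h₂ => ?_, fun h => ?_, fun h => ?_⟩⟩
  · exact penalty_of_violated_of_le w hviol ((movedActivity_le_iff_le_breakpoint b xbar ha).2 h)
  · exact penalty_of_violated_of_lt_activity w hviol
      ((lt_movedActivity_iff_breakpoint_lt b xbar ha).2 h₁) (hself ▸ hmono h₂)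
  · exact penalty_of_violated_of_eq_activity w hviol (h ▸ hself)
  · exact penalty_of_violated_of_activity_lt w hviol (hself ▸ hmono h)

/-- Piecewise form of the penalty for a positive coefficient and a violated constraint. -/
theorem penalty_piecewise_pos_violated
    {m n : ℕ} (a : Fin m → Fin n → ℝ) (b w : Fin m → ℝ)
    (xbar : Fin n → ℝ) (j : Fin n) (i : Fin m)
    (hw : ∀ i, 0 ≤ w i) (ha : a i j > 0) (hviol : activity a xbar i > b i) :
    xbar j > breakpoint a b xbar j i ∧
    ∀ xhat : ℝ,
      (xhat ≤ breakpoint a b xbar j i → penalty a b w xbar j i xhat = w i) ∧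
      (breakpoint a b xbar j i < xhat → xhat < xbar j →
        penalty a b w xbar j i xhat = w i / 2) ∧
      (xhat = xbar j → penalty a b w xbar j i xhat = 0) ∧
      (xhat > xbar j → penalty a b w xbar j i xhat = -w i / 2) :=
  penalty_piecewise_pos_violated_general a b w xbar j i ha hviol
end

section
/- Each constraint's penalty is maximized at its own breakpoint: if a_{ij} ≠ 0, then for every candidate value x̂_j ∈ ℝ one has p_{ij}(x̂_j, x̄) ≤ p_{ij}(t_{ij}, x̄). -/
open Finset

/- At the breakpoint the moved activity equals `b i` exactly, so the penalty there is `0` for a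
constraint satisfied at `xbar` and the maximal value `w i` for a violated one; any other candidate
can only do worse: at most `0` (resp. `w i`). -/

theorem movedActivity_breakpoint {m n : ℕ} (a : Fin m → Fin n → ℝ) (b : Fin m → ℝ)
    (xbar : Fin n → ℝ) (j : Fin n) (i : Fin m) (ha : a i j ≠ 0) :
    movedActivity a xbar j i (breakpoint a b xbar j i) = b i := by
  unfold movedActivity breakpoint
  rw [mul_div_cancel₀ _ ha]
  ring

section

variable {m n : ℕ} (a : Fin m → Fin n → ℝ) (b w : Fin m → ℝ) (xbar : Fin n → ℝ) (j : Fin n)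
  (i : Fin m) (xhat : ℝ)

theorem penalty_of_movedActivity_eq (h : movedActivity a xbar j i xhat = b i) :
    penalty a b w xbar j i xhat = if activity a xbar i ≤ b i then 0 else w i := by
  unfold penalty
  rw [h]
  split_ifs <;> grind

theorem penalty_nonpos_of_activity_le (hw : 0 ≤ w i) (h : activity a xbar i ≤ b i) :
    penalty a b w xbar j i xhat ≤ 0 := by
  unfold penalty
  split_ifs <;> linarith

theorem penalty_le_weight (hw : 0 ≤ w i) : penalty a b w xbar j i xhat ≤ w i := by
  unfold penalty
  split_ifs <;> linarith

end

/-- Each constraint's penalty is maximized at its own breakpoint. -/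
theorem penalty_le_penalty_breakpoint
    {m n : ℕ} (a : Fin m → Fin n → ℝ) (b w : Fin m → ℝ)
    (xbar : Fin n → ℝ) (j : Fin n) (i : Fin m)
    (hw : ∀ i, 0 ≤ w i) (ha : a i j ≠ 0) :
    ∀ xhat : ℝ,
      penalty a b w xbar j i xhat ≤ penalty a b w xbar j i (breakpoint a b xbar j i) := by
  intro xhat
  rw [penalty_of_movedActivity_eq a b w xbar j i _ (movedActivity_breakpoint a b xbar j i ha)]
  split_ifs with h
  · exact penalty_nonpos_of_activity_le a b w xbar j i xhat (hw i) h
  · exact penalty_le_weight a b w xbar j i xhat (hw i)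
end
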